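/- Let exp_L : ℂ^7 → (ℂ*)^7 be the coordinatewise map t ↦ e^{2πit}. Let V_8 = exp_L(span_ℂ{e_1 - e_3 - e_4 + e_6, e_2 - e_3 - e_4}) and V_9 = exp_L(span_ℂ{-e_2 - e_3 + e_5 + e_6, e_2 + e_3 - e_4}) be the corresponding subtori of (ℂ*)^7. Then V_8 ∩ V_9 = {1, ρ} where ρ = (1,-1,-1,-1,1,1,1). -/
import Mathlib


open Complex

/-- The exponential `t ↦ e^{2πit}` as a unit of `ℂ`. -/
noncomputable def expu (t : ℂ) : ℂˣ :=
  Units.mk0 (Complex.exp (2 * Real.pi * Complex.I * t)) (Complex.exp_ne_zero _)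

/-- The coordinatewise exponential `exp_L : ℂⁿ → (ℂ*)ⁿ` as a group homomorphism. -/
noncomputable def expL (n : ℕ) : Multiplicative (Fin n → ℂ) →* (Fin n → ℂˣ) where
  toFun t i := expu (Multiplicative.toAdd t i)
  map_one' := by
    funext i
    apply Units.ext
    simp [expu]
  map_mul' a b := by
    funext i
    apply Units.ext
    simp [expu, mul_add, Complex.exp_add]

/-- Inclusion of the lattice `ℤⁿ` into `ℂⁿ`. -/
def zc {n : ℕ} (v : Fin n → ℤ) : Fin n → ℂ := fun i => (v i : ℂ)

/-- The complexification `A ⊗ ℂ` of a sublattice `A ⊆ ℤⁿ`, as the ℂ-span of `A` in `ℂⁿ`. -/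
noncomputable def VC {n : ℕ} (A : Submodule ℤ (Fin n → ℤ)) : Submodule ℂ (Fin n → ℂ) :=
  Submodule.span ℂ (zc '' (A : Set (Fin n → ℤ)))

/-- The subtorus `exp_L(V)` of `(ℂ*)ⁿ` associated to a ℂ-subspace `V ⊆ ℂⁿ`. -/
noncomputable def expT {n : ℕ} (V : Submodule ℂ (Fin n → ℂ)) : Subgroup (Fin n → ℂˣ) :=
  Subgroup.map (expL n) (AddSubgroup.toSubgroup V.toAddSubgroup)

/-- A sublattice `A ⊆ ℤⁿ` is primitive if `ℤⁿ/A` is torsion-free. -/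
def IsPrimitive {n : ℕ} (A : Submodule ℤ (Fin n → ℤ)) : Prop :=
  ∀ (m : ℤ) (x : Fin n → ℤ), m ≠ 0 → m • x ∈ A → x ∈ A

section Vec7
variable {α : Type*} (a b c d e f g : α)
lemma vec7_0 : ![a,b,c,d,e,f,g] 0 = a := rfl
lemma vec7_1 : ![a,b,c,d,e,f,g] 1 = b := rfl
lemma vec7_2 : ![a,b,c,d,e,f,g] 2 = c := rfl
lemma vec7_m0 (h : (0:ℕ) < 7) : ![a,b,c,d,e,f,g] ⟨0,h⟩ = a := rfl
lemma vec7_m1 (h : (1:ℕ) < 7) : ![a,b,c,d,e,f,g] ⟨1,h⟩ = b := rfl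
lemma vec7_m2 (h : (2:ℕ) < 7) : ![a,b,c,d,e,f,g] ⟨2,h⟩ = c := rfl
lemma vec7_m3 (h : (3:ℕ) < 7) : ![a,b,c,d,e,f,g] ⟨3,h⟩ = d := rfl
lemma vec7_m4 (h : (4:ℕ) < 7) : ![a,b,c,d,e,f,g] ⟨4,h⟩ = e := rfl
lemma vec7_m5 (h : (5:ℕ) < 7) : ![a,b,c,d,e,f,g] ⟨5,h⟩ = f := rfl
lemma vec7_m6 (h : (6:ℕ) < 7) : ![a,b,c,d,e,f,g] ⟨6,h⟩ = g := rfl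
end Vec7

lemma two_pi_I_ne : (2 * (Real.pi:ℂ) * I) ≠ 0 := by
  simp [Real.pi_ne_zero, I_ne_zero]

lemma expu_eq_expu_iff {s t : ℂ} : expu s = expu t ↔ ∃ n : ℤ, s = t + n := by
  rw [Units.ext_iff]
  show cexp _ = cexp _ ↔ _
  rw [Complex.exp_eq_exp_iff_exists_int]
  constructor
  · rintro ⟨n, h⟩
    refine ⟨n, mul_left_cancel₀ two_pi_I_ne ?_⟩
    rw [h]; ring
  · rintro ⟨n, rfl⟩
    exact ⟨n, by ring⟩

lemma expu_int (n : ℤ) : expu n = 1 := by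
  apply Units.ext
  show cexp _ = 1
  rw [show 2 * (Real.pi:ℂ) * I * n = n * (2 * Real.pi * I) by ring]
  exact Complex.exp_int_mul_two_pi_mul_I n

lemma expu_zero : expu 0 = 1 := by simpa using expu_int 0

lemma expu_half : expu (1/2) = -1 := by
  apply Units.ext
  show cexp _ = _
  rw [show 2 * (Real.pi:ℂ) * I * (1/2) = Real.pi * I by ring, Complex.exp_pi_mul_I]
  rfl

lemma expu_eq_one_iff {t : ℂ} : expu t = 1 ↔ ∃ n : ℤ, t = n := by
  rw [← expu_zero, expu_eq_expu_iff]; simp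

lemma expu_eq_neg_one_iff {t : ℂ} : expu t = -1 ↔ ∃ n : ℤ, t = 1/2 + n := by
  rw [← expu_half, expu_eq_expu_iff]

lemma mem_expT_iff {n : ℕ} (V : Submodule ℂ (Fin n → ℂ)) (x : Fin n → ℂˣ) :
    x ∈ expT V ↔ ∃ t ∈ V, (fun i => expu (t i)) = x := by
  simp only [expT, Subgroup.mem_map]
  constructor
  · rintro ⟨y, hy, rfl⟩
    exact ⟨Multiplicative.toAdd y, hy, rfl⟩
  · rintro ⟨t, ht, rfl⟩
    exact ⟨Multiplicative.ofAdd t, ht, rfl⟩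

/-- For the deleted B₃ arrangement, the subtori
`V₈ = exp_L(span_ℂ{e₁-e₃-e₄+e₆, e₂-e₃-e₄})` and
`V₉ = exp_L(span_ℂ{-e₂-e₃+e₅+e₆, e₂+e₃-e₄})` of `(ℂ*)⁷` satisfy
`V₈ ∩ V₉ = {1, ρ}` with `ρ = (1,-1,-1,-1,1,1,1)`. -/
theorem stmt_13 :
    ((expT (Submodule.span ℂ {zc ![1, 0, -1, -1, 0, 1, 0], zc ![0, 1, -1, -1, 0, 0, 0]}) ⊓
      expT (Submodule.span ℂ {zc ![0, -1, -1, 0, 1, 1, 0], zc ![0, 1, 1, -1, 0, 0, 0]}) :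
        Subgroup (Fin 7 → ℂˣ)) : Set (Fin 7 → ℂˣ)) =
      {1, ![1, -1, -1, -1, 1, 1, 1]} := by
  ext x
  simp only [SetLike.mem_coe, Subgroup.mem_inf, mem_expT_iff, Submodule.mem_span_pair,
    Set.mem_insert_iff, Set.mem_singleton_iff]
  constructor
  · rintro ⟨⟨t, ⟨α, β, rfl⟩, rfl⟩, ⟨s, ⟨γ, δ, rfl⟩, hEq⟩⟩
    have hT : α • zc ![1, 0, -1, -1, 0, 1, 0] + β • zc ![0, 1, -1, -1, 0, 0, 0]
        = ![α, β, -α-β, -α-β, 0, α, 0] := by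
      funext i
      fin_cases i <;>
        simp only [Pi.add_apply, Pi.smul_apply, smul_eq_mul, zc, vec7_m0, vec7_m1, vec7_m2,
          vec7_m3, vec7_m4, vec7_m5, vec7_m6] <;> push_cast <;> ring
    have hS : γ • zc ![0, -1, -1, 0, 1, 1, 0] + δ • zc ![0, 1, 1, -1, 0, 0, 0]
        = ![0, -γ+δ, -γ+δ, -δ, γ, γ, 0] := by
      funext i
      fin_cases i <;>
        simp only [Pi.add_apply, Pi.smul_apply, smul_eq_mul, zc, vec7_m0, vec7_m1, vec7_m2,
          vec7_m3, vec7_m4, vec7_m5, vec7_m6] <;> push_cast <;> ring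
    rw [hT] at hEq ⊢
    rw [hS] at hEq
    have h0 := congrFun hEq 0
    have h1 := congrFun hEq 1
    have h2 := congrFun hEq 2
    simp only [vec7_0, vec7_1, vec7_2, expu_eq_expu_iff] at h0 h1 h2
    obtain ⟨n0, hn0⟩ := h0
    obtain ⟨n1, hn1⟩ := h1
    obtain ⟨n2, hn2⟩ := h2
    have hα : α = -(n0:ℂ) := by linear_combination -hn0
    have h2β : 2*β = ((n0 - n1 + n2 : ℤ) : ℂ) := by push_cast; linear_combination hn0 - hn1 + hn2
    rcases Int.even_or_odd (n0 - n1 + n2) with ⟨m, hm⟩ | ⟨m, hm⟩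
    · left
      have hβ : β = (m:ℂ) := by
        have h2 : (2:ℂ) ≠ 0 := two_ne_zero
        refine mul_left_cancel₀ h2 ?_
        rw [h2β, hm]; push_cast; ring
      funext i
      fin_cases i <;>
        simp only [vec7_m0, vec7_m1, vec7_m2, vec7_m3, vec7_m4, vec7_m5, vec7_m6,
          Pi.one_apply, expu_eq_one_iff]
      · exact ⟨-n0, by rw [hα]; push_cast; ring⟩
      · exact ⟨m, hβ⟩
      · exact ⟨n0 - m, by rw [hα, hβ]; push_cast; ring⟩
      · exact ⟨n0 - m, by rw [hα, hβ]; push_cast; ring⟩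
      · exact ⟨0, by push_cast; ring⟩
      · exact ⟨-n0, by rw [hα]; push_cast; ring⟩
      · exact ⟨0, by push_cast; ring⟩
    · right
      have hβ : β = (m:ℂ) + 1/2 := by
        have h2 : (2:ℂ) ≠ 0 := two_ne_zero
        refine mul_left_cancel₀ h2 ?_
        rw [h2β, hm]; push_cast; ring
      funext i
      fin_cases i <;>
        simp only [vec7_m0, vec7_m1, vec7_m2, vec7_m3, vec7_m4, vec7_m5, vec7_m6]
      · rw [expu_eq_one_iff]; exact ⟨-n0, by rw [hα]; push_cast; ring⟩
      · rw [expu_eq_neg_one_iff]; exact ⟨m, by rw [hβ]; push_cast; ring⟩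
      · rw [expu_eq_neg_one_iff]; exact ⟨n0 - m - 1, by rw [hα, hβ]; push_cast; ring⟩
      · rw [expu_eq_neg_one_iff]; exact ⟨n0 - m - 1, by rw [hα, hβ]; push_cast; ring⟩
      · rw [expu_eq_one_iff]; exact ⟨0, by push_cast; ring⟩
      · rw [expu_eq_one_iff]; exact ⟨-n0, by rw [hα]; push_cast; ring⟩
      · rw [expu_eq_one_iff]; exact ⟨0, by push_cast; ring⟩
  · rintro (rfl | rfl)
    · refine ⟨⟨0, ⟨0, 0, by simp⟩, ?_⟩, ⟨0, ⟨0, 0, by simp⟩, ?_⟩⟩ <;>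
        · funext i; simpa using expu_zero
    · constructor
      · refine ⟨(1/2 : ℂ) • zc ![0, 1, -1, -1, 0, 0, 0],
          ⟨0, 1/2, by rw [zero_smul, zero_add]⟩, ?_⟩
        funext i
        fin_cases i <;>
          simp only [Pi.smul_apply, smul_eq_mul, zc, vec7_m0, vec7_m1, vec7_m2, vec7_m3,
            vec7_m4, vec7_m5, vec7_m6]
        · rw [show (1/2 : ℂ) * ((0:ℤ):ℂ) = 0 by push_cast; ring, expu_zero]
        · rw [show (1/2 : ℂ) * ((1:ℤ):ℂ) = 1/2 by push_cast; ring, expu_half]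
        · rw [show (1/2 : ℂ) * ((-1:ℤ):ℂ) = ((-1:ℤ):ℂ) + 1/2 by push_cast; ring,
            expu_eq_neg_one_iff.2 ⟨-1, by push_cast; ring⟩]
        · rw [show (1/2 : ℂ) * ((-1:ℤ):ℂ) = ((-1:ℤ):ℂ) + 1/2 by push_cast; ring,
            expu_eq_neg_one_iff.2 ⟨-1, by push_cast; ring⟩]
        · rw [show (1/2 : ℂ) * ((0:ℤ):ℂ) = 0 by push_cast; ring, expu_zero]
        · rw [show (1/2 : ℂ) * ((0:ℤ):ℂ) = 0 by push_cast; ring, expu_zero]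
        · rw [show (1/2 : ℂ) * ((0:ℤ):ℂ) = 0 by push_cast; ring, expu_zero]
      · refine ⟨(1/2 : ℂ) • zc ![0, 1, 1, -1, 0, 0, 0],
          ⟨0, 1/2, by rw [zero_smul, zero_add]⟩, ?_⟩
        funext i
        fin_cases i <;>
          simp only [Pi.smul_apply, smul_eq_mul, zc, vec7_m0, vec7_m1, vec7_m2, vec7_m3,
            vec7_m4, vec7_m5, vec7_m6]
        · rw [show (1/2 : ℂ) * ((0:ℤ):ℂ) = 0 by push_cast; ring, expu_zero]
        · rw [show (1/2 : ℂ) * ((1:ℤ):ℂ) = 1/2 by push_cast; ring, expu_half]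
        · rw [show (1/2 : ℂ) * ((1:ℤ):ℂ) = 1/2 by push_cast; ring, expu_half]
        · rw [show (1/2 : ℂ) * ((-1:ℤ):ℂ) = ((-1:ℤ):ℂ) + 1/2 by push_cast; ring,
            expu_eq_neg_one_iff.2 ⟨-1, by push_cast; ring⟩]
        · rw [show (1/2 : ℂ) * ((0:ℤ):ℂ) = 0 by push_cast; ring, expu_zero]
        · rw [show (1/2 : ℂ) * ((0:ℤ):ℂ) = 0 by push_cast; ring, expu_zero]
        · rw [show (1/2 : ℂ) * ((0:ℤ):ℂ) = 0 by push_cast; ring, expu_zero]
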